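/- Let M be a finite set of goods, let v : 2^M → ℝ≥0 be an additive valuation, let n ≥ 3 be an integer, and let g_1, g_2, g_3 ∈ M be pairwise distinct goods such that v({g_2}) + v({g_3}) ≤ μ^n(M). Then μ^{n−2}(M \ {g_1, g_2, g_3}) ≥ μ^n(M), where μ^d(S) denotes the maximum over all partitions of S into d bundles of the minimum value of a bundle under v. -/

import Mathlib

open Finset

/-- The `d`-maximin share of valuation `v` over the set `S` of goods:
the maximum over partitions of `S` into `d` bundles of the minimum bundle value. -/
noncomputable def mms {G : Type*} (v : Finset G → ℝ) (d : ℕ) (S : Finset G) : ℝ :=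
  ⨆ P : G → Fin d, ⨅ j : Fin d, v (S.filter fun g => P g = j)

/-!
Take an optimal partition of `M` into `n` bundles, all worth at least `μ = μ^n(M)`, and merge
three bundles `T` containing `g₁, g₂, g₃` into one, leaving `n - 2` bundles. The untouched
bundles keep their value. Removing the three goods costs the merged bundle
`w g₁ + w g₂ + w g₃`; the bundle of `g₁` pays for `w g₁`, and the other two bundles of `T`,
worth at least `2μ`, pay for `w g₂ + w g₃ ≤ μ`.
-/

namespace MaximinShare

section Partitions

variable {G : Type*} [Finite G] (v : Finset G → ℝ) {d : ℕ} (S : Finset G)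

theorem exists_partition_forall_mms_le [NeZero d] :
    ∃ P : G → Fin d, ∀ j, mms v d S ≤ v {g ∈ S | P g = j} := by
  obtain ⟨P, hP⟩ := Finite.exists_max fun P : G → Fin d => ⨅ j, v {g ∈ S | P g = j}
  exact ⟨P, fun j => (ciSup_le hP).trans (ciInf_le (Set.finite_range _).bddBelow j)⟩

theorem le_mms_of_partition {ι : Type*} [Fintype ι] [DecidableEq ι] [Nonempty ι]
    (hι : Fintype.card ι = d) (P : G → ι) {x : ℝ} (hP : ∀ i, x ≤ v {g ∈ S | P g = i}) :
    x ≤ mms v d S := by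
  let e := Fintype.equivFinOfCardEq hι
  have : Nonempty (Fin d) := ⟨e (Classical.arbitrary ι)⟩
  refine (le_ciInf fun j => ?_).trans
    (le_ciSup (f := fun P : G → Fin d => ⨅ j, v {g ∈ S | P g = j})
      (Set.finite_range _).bddAbove (e ∘ P))
  simpa only [Function.comp_apply, ← e.eq_symm_apply] using hP (e.symm j)

end Partitions

section Merging

variable {G ι : Type*} [DecidableEq ι] (P : G → ι) (T : Finset ι) (S : Finset G)

/-- The bundles of `P` indexed by `T` merged into the single bundle `none`. -/
def mergeBundles (g : G) : Option {i // i ∉ T} :=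
  if h : P g ∈ T then none else some ⟨P g, h⟩

theorem card_mergeBundles_index [Fintype ι] :
    Fintype.card (Option {i // i ∉ T}) = Fintype.card ι - #T + 1 := by
  rw [Fintype.card_option, Fintype.card_subtype_compl, Fintype.card_coe]

theorem filter_mergeBundles_eq_none :
    {g ∈ S | mergeBundles P T g = none} = {g ∈ S | P g ∈ T} := by
  ext g
  by_cases h : P g ∈ T <;> simp [mergeBundles, h]

theorem filter_sdiff_mergeBundles_eq_some [DecidableEq G] {R : Finset G}
    (hRT : ∀ g ∈ R, P g ∈ T) (i : {i // i ∉ T}) :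
    {g ∈ S \ R | mergeBundles P T g = some i} = {g ∈ S | P g = i} := by
  ext g
  by_cases h : P g ∈ T
  · simpa [mergeBundles, h] using fun _ (hi : P g = i) => i.2 (hi ▸ h)
  · simpa [mergeBundles, h, Subtype.ext_iff] using fun _ _ hg => h (hRT g hg)

end Merging

section Additive

variable {G ι : Type*} [DecidableEq ι] (w : G → ℝ) (P : G → ι) (T : Finset ι)

theorem sum_filter_sdiff_eq [DecidableEq G] {S R : Finset G} (hRS : R ⊆ S)
    (hRT : ∀ g ∈ R, P g ∈ T) :
    ∑ g ∈ S \ R with P g ∈ T, w g = ∑ t ∈ T, ∑ g ∈ S with P g = t, w g - ∑ g ∈ R, w g := by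
  rw [sum_fiberwise_eq_sum_filter, ← sum_sdiff_eq_sub]
  · congr 1
    ext g
    simp only [mem_filter, mem_sdiff]
    tauto
  · exact fun g hg => mem_filter.2 ⟨hRS hg, hRT g hg⟩

theorem add_nsmul_le_sum_bundles (hw : ∀ g, 0 ≤ w g) {S : Finset G} {μ : ℝ}
    (hP : ∀ t, μ ≤ ∑ g ∈ S with P g = t, w g) {g₀ : G} (hg₀ : g₀ ∈ S) (hT : P g₀ ∈ T) :
    w g₀ + #(T.erase (P g₀)) • μ ≤ ∑ t ∈ T, ∑ g ∈ S with P g = t, w g := by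
  rw [← add_sum_erase _ _ hT]
  gcongr
  · exact single_le_sum (fun g _ => hw g) (mem_filter.2 ⟨hg₀, rfl⟩)
  · exact card_nsmul_le_sum _ _ _ fun t _ => hP t

end Additive

end MaximinShare

open MaximinShare in
/-- For an additive valuation (weights `w`), `n ≥ 3`, and pairwise distinct
goods `g₁, g₂, g₃` with `w g₂ + w g₃ ≤ μ^n(M)`, removing them and two agents does not
decrease the maximin share: `μ^{n−2}(M \ {g₁, g₂, g₃}) ≥ μ^n(M)`. -/
theorem stmt14 {G : Type*} [Fintype G] [DecidableEq G]
    (w : G → ℝ) (hw : ∀ g, 0 ≤ w g) (n : ℕ) (hn : 3 ≤ n)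
    (g₁ g₂ g₃ : G) (h12 : g₁ ≠ g₂) (h13 : g₁ ≠ g₃) (h23 : g₂ ≠ g₃)
    (hval : w g₂ + w g₃ ≤ mms (fun S => ∑ g ∈ S, w g) n Finset.univ) :
    mms (fun S => ∑ g ∈ S, w g) n Finset.univ ≤
      mms (fun S => ∑ g ∈ S, w g) (n - 2) (Finset.univ \ {g₁, g₂, g₃}) := by
  have : NeZero n := ⟨by omega⟩
  obtain ⟨P, hP⟩ := exists_partition_forall_mms_le (fun S => ∑ g ∈ S, w g) (d := n) univ
  obtain ⟨T, hT, hTcard⟩ := exists_superset_card_eq (s := {P g₁, P g₂, P g₃})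
    card_le_three (by simpa using hn)
  have hRT : ∀ g ∈ ({g₁, g₂, g₃} : Finset G), P g ∈ T := by
    simpa [insert_subset_iff] using hT
  refine le_mms_of_partition _ _ (by rw [card_mergeBundles_index, Fintype.card_fin, hTcard]; omega)
    (mergeBundles P T) ?_
  rintro (_ | i)
  · have hT₁ := hRT g₁ (by simp)
    have hbundles := add_nsmul_le_sum_bundles w P T hw hP (mem_univ g₁) hT₁
    rw [card_erase_of_mem hT₁, hTcard, two_nsmul] at hbundles
    rw [filter_mergeBundles_eq_none, sum_filter_sdiff_eq w P T (subset_univ _) hRT,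
      sum_insert (by simp [h12, h13]), sum_pair h23]
    linarith
  · rw [filter_sdiff_mergeBundles_eq_some _ _ _ hRT]
    exact hP i
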